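/- Every *-structure on the Radford algebra H satisfies g* = g. -/

import Mathlib

open TensorProduct

noncomputable section

/-- The Gaussian (`q`-)binomial coefficient `C(m, k)_q`, defined by the `q`-Pascal
recurrence `C(m+1, k+1)_q = C(m, k)_q + q^(k+1) * C(m, k+1)_q`. -/
def qBinom (q : ℂ) : ℕ → ℕ → ℂ
  | _, 0 => 1
  | 0, _ + 1 => 0
  | m + 1, k + 1 => qBinom q m k + q ^ (k + 1) * qBinom q m (k + 1)

/-- The Radford algebra: a Hopf algebra `H` over `ℂ` generated by elements
`g, x, y` subject to the relations `g^n = 1`, `x^n = y^n = 0`, `xg = ω g x`,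
`g y = ω y g`, `x y = ω y x`, where `ω` is a root of unity of order `n > 1`,
with the comultiplication, counit and antipode determined by
`Δ(g) = g ⊗ g`, `ε(g) = 1`, `S(g) = g^(n-1)`,
`Δ(x) = x ⊗ g + 1 ⊗ x`, `ε(x) = 0`, `S(x) = -x g^(n-1)`,
`Δ(y) = y ⊗ g + 1 ⊗ y`, `ε(y) = 0`, `S(y) = -y g^(n-1)`,
and with canonical `ℂ`-basis `{y^r x^s g^l | 0 ≤ r, s, l < n}`. -/
structure RadfordAlgebra (n : ℕ) (ω : ℂ) (H : Type*) [Ring H] [HopfAlgebra ℂ H] where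
  g : H
  x : H
  y : H
  hn : 1 < n
  hω : IsPrimitiveRoot ω n
  g_pow : g ^ n = 1
  x_pow : x ^ n = 0
  y_pow : y ^ n = 0
  rel_xg : x * g = ω • (g * x)
  rel_gy : g * y = ω • (y * g)
  rel_xy : x * y = ω • (y * x)
  comul_g : Coalgebra.comul (R := ℂ) g = g ⊗ₜ[ℂ] g
  counit_g : Coalgebra.counit (R := ℂ) g = 1
  antipode_g : HopfAlgebra.antipode (R := ℂ) g = g ^ (n - 1)
  comul_x : Coalgebra.comul (R := ℂ) x = x ⊗ₜ[ℂ] g + 1 ⊗ₜ[ℂ] x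
  counit_x : Coalgebra.counit (R := ℂ) x = 0
  antipode_x : HopfAlgebra.antipode (R := ℂ) x = -(x * g ^ (n - 1))
  comul_y : Coalgebra.comul (R := ℂ) y = y ⊗ₜ[ℂ] g + 1 ⊗ₜ[ℂ] y
  counit_y : Coalgebra.counit (R := ℂ) y = 0
  antipode_y : HopfAlgebra.antipode (R := ℂ) y = -(y * g ^ (n - 1))
  gen : Algebra.adjoin ℂ ({g, x, y} : Set H) = ⊤
  basis : Module.Basis (Fin n × Fin n × Fin n) ℂ H
  basis_eq : ∀ r s l : Fin n, basis (r, s, l) = y ^ (r : ℕ) * x ^ (s : ℕ) * g ^ (l : ℕ)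

/-- A `*`-structure on a Hopf algebra `H` over `ℂ`: a conjugate-linear map
`* : H → H` such that `(h*)* = h`, `(hl)* = l* h*`,
`Δ(h*) = Σ (h₁)* ⊗ (h₂)*` and `S(S(h*)*) = h` for all `h, l ∈ H`.
(The condition on `Δ` is expressed via the auxiliary additive map `starTensor`
on `H ⊗[ℂ] H` sending `a ⊗ b` to `a* ⊗ b*`, which is uniquely determined by
its two defining properties.) -/
structure HopfStarStructure (H : Type*) [Ring H] [HopfAlgebra ℂ H] where
  star : H → H
  star_add : ∀ a b : H, star (a + b) = star a + star b
  star_smul : ∀ (c : ℂ) (a : H), star (c • a) = (starRingEnd ℂ c) • star a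
  star_star : ∀ a : H, star (star a) = a
  star_mul : ∀ a b : H, star (a * b) = star b * star a
  starTensor : H ⊗[ℂ] H → H ⊗[ℂ] H
  starTensor_add : ∀ u v : H ⊗[ℂ] H, starTensor (u + v) = starTensor u + starTensor v
  starTensor_tmul : ∀ a b : H, starTensor (a ⊗ₜ[ℂ] b) = star a ⊗ₜ[ℂ] star b
  comul_star : ∀ a : H,
    Coalgebra.comul (R := ℂ) (star a) = starTensor (Coalgebra.comul (R := ℂ) a)
  antipode_star : ∀ a : H,
    HopfAlgebra.antipode (R := ℂ) (star (HopfAlgebra.antipode (R := ℂ) (star a))) = a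

/-- Two `*`-structures `*'` and `*''` on a Hopf algebra `H` over `ℂ` are
equivalent if there is a Hopf algebra automorphism `ψ` of `H` such that
`ψ(h^{*'}) = ψ(h)^{*''}` for all `h ∈ H`. -/
def HopfStarStructure.Equivalent {H : Type*} [Ring H] [HopfAlgebra ℂ H]
    (s₁ s₂ : HopfStarStructure H) : Prop :=
  ∃ ψ : H ≃ₐc[ℂ] H, ∀ h : H, ψ (s₁.star h) = s₂.star (ψ h)

/-!
`g*` is group-like, and comparing coefficients of `Δ` in the basis `y^r x^s g^l` shows that the
group-likes of `H` are the powers `g^k`. So `g* = g^k`, and `x*` is `(g^k, 1)`-skew-primitive: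
`Δ(x*) = x* ⊗ g^k + 1 ⊗ x*`. The same comparison shows that for `k ≠ 1` such an element lies in
the span of the powers of `g`; the decisive coefficients are the `ω`-binomial coefficients
`[k]_ω = 1 + ω + ⋯ + ω^(k-1) ≠ 0` of the cross terms of `Δ(y^k)` and `Δ(x^k)`. As `*` maps the
span of the powers of `g` into itself once `g* = g^k`, also `x = (x*)*` would lie in it,
which it does not.
-/

open Finset

theorem qBinom_zero_right (q : ℂ) (m : ℕ) : qBinom q m 0 = 1 := by
  cases m <;> rfl

theorem qBinom_succ_succ (q : ℂ) (m k : ℕ) :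
    qBinom q (m + 1) (k + 1) = qBinom q m k + q ^ (k + 1) * qBinom q m (k + 1) := rfl

theorem qBinom_of_lt (q : ℂ) {m k : ℕ} (h : m < k) : qBinom q m k = 0 := by
  induction m generalizing k with
  | zero => obtain ⟨k, rfl⟩ := Nat.exists_eq_add_one_of_ne_zero h.ne'; rfl
  | succ m ih =>
    obtain ⟨k, rfl⟩ := Nat.exists_eq_add_one_of_ne_zero (show k ≠ 0 by omega)
    rw [qBinom_succ_succ, ih (by omega), ih (by omega), mul_zero, add_zero]

theorem qBinom_self (q : ℂ) (m : ℕ) : qBinom q m m = 1 := by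
  induction m with
  | zero => rfl
  | succ m ih => rw [qBinom_succ_succ, ih, qBinom_of_lt q m.lt_succ_self, mul_zero, add_zero]

theorem qBinom_one_right (q : ℂ) (m : ℕ) : qBinom q m 1 = ∑ t ∈ range m, q ^ t := by
  induction m with
  | zero => rfl
  | succ m ih => rw [qBinom_succ_succ, qBinom_zero_right, ih, sum_range_succ', mul_sum]; ring_nf

theorem IsPrimitiveRoot.qBinom_one_ne_zero {ω : ℂ} {n m : ℕ} (hω : IsPrimitiveRoot ω n)
    (hm : 0 < m) (hmn : m < n) : qBinom ω m 1 ≠ 0 := by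
  have hω₁ : ω ≠ 1 := hω.ne_one (by omega)
  rw [qBinom_one_right, geom_sum_eq hω₁]
  exact div_ne_zero (sub_ne_zero.mpr (hω.pow_ne_one_of_pos_of_lt hm.ne' hmn))
    (sub_ne_zero.mpr hω₁)

section

variable {A : Type*} [Semiring A] [Algebra ℂ A] {a b : A} {q : ℂ}

theorem pow_mul_pow_of_mul_eq_smul (h : a * b = q • (b * a)) (i j : ℕ) :
    a ^ i * b ^ j = q ^ (i * j) • (b ^ j * a ^ i) := by
  have h₁ : ∀ j : ℕ, a * b ^ j = q ^ j • (b ^ j * a) := by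
    intro j
    induction j with
    | zero => simp
    | succ j ih =>
      rw [pow_succ, ← mul_assoc, ih, smul_mul_assoc, mul_assoc, h, mul_smul_comm, smul_smul,
        ← mul_assoc, ← pow_succ]
  induction i with
  | zero => simp
  | succ i ih =>
    rw [pow_succ', mul_assoc, ih, mul_smul_comm, ← mul_assoc, h₁, smul_mul_assoc, smul_smul,
      mul_assoc, ← pow_succ', ← pow_add, Nat.succ_mul, add_comm (i * j)]

theorem add_pow_of_mul_eq_smul (h : b * a = q • (a * b)) (m : ℕ) :
    (a + b) ^ m = ∑ x ∈ antidiagonal m, qBinom q m x.1 • (a ^ x.1 * b ^ x.2) := by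
  induction m with
  | zero => simp [qBinom_zero_right]
  | succ m ih =>
    have hb : ∀ i j : ℕ, b * (a ^ i * b ^ j) = q ^ i • (a ^ i * b ^ (j + 1)) := by
      intro i j
      have hb₁ := pow_mul_pow_of_mul_eq_smul h 1 i
      simp only [pow_one, one_mul] at hb₁
      rw [← mul_assoc, hb₁, smul_mul_assoc, mul_assoc, ← pow_succ']
    set g : ℕ × ℕ → A := fun x ↦ (q ^ x.1 * qBinom q m x.1) • (a ^ x.1 * b ^ x.2)
    have hg : ∑ x ∈ antidiagonal m, g (x.1, x.2 + 1)
        = g (0, m + 1) + ∑ x ∈ antidiagonal m, g (x.1 + 1, x.2) := by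
      rw [← Nat.sum_antidiagonal_succ, Nat.sum_antidiagonal_succ']
      simp [g, qBinom_of_lt q m.lt_succ_self]
    have hterm : ∀ x ∈ antidiagonal m, (a + b) * (qBinom q m x.1 • (a ^ x.1 * b ^ x.2))
        = qBinom q m x.1 • (a ^ (x.1 + 1) * b ^ x.2) + g (x.1, x.2 + 1) := by
      intro x _
      rw [add_mul, mul_smul_comm, mul_smul_comm, ← mul_assoc, ← pow_succ', hb, smul_smul,
        mul_comm (qBinom q m x.1)]
    rw [pow_succ', ih, mul_sum, sum_congr rfl hterm, sum_add_distrib, hg,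
      Nat.sum_antidiagonal_succ]
    simp only [g, qBinom_succ_succ, add_smul, sum_add_distrib, qBinom_zero_right, pow_zero,
      one_mul, one_smul, mul_one]
    abel

end

namespace HopfStarStructure

variable {H : Type*} [Ring H] [HopfAlgebra ℂ H] (st : HopfStarStructure H)

theorem star_zero : st.star 0 = 0 := by
  simpa using st.star_smul 0 0

theorem star_one : st.star 1 = 1 := by
  simpa [st.star_star] using (st.star_mul (st.star 1) 1).symm

theorem star_pow (a : H) (m : ℕ) : st.star (a ^ m) = st.star a ^ m := by
  induction m with
  | zero => simpa using st.star_one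
  | succ m ih => rw [pow_succ', st.star_mul, ih, pow_succ]

theorem star_ne_zero {a : H} (ha : a ≠ 0) : st.star a ≠ 0 := fun h ↦
  ha (by rw [← st.star_star a, h, st.star_zero])

theorem comul_star_of_comul_eq_tmul_self {a : H}
    (ha : Coalgebra.comul (R := ℂ) a = a ⊗ₜ[ℂ] a) :
    Coalgebra.comul (R := ℂ) (st.star a) = st.star a ⊗ₜ[ℂ] st.star a := by
  rw [st.comul_star, ha, st.starTensor_tmul]

end HopfStarStructure

namespace RadfordAlgebra

variable {n : ℕ} {ω : ℂ} {H : Type*} [Ring H] [HopfAlgebra ℂ H]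

theorem neZero (R : RadfordAlgebra n ω H) : NeZero n := ⟨by have := R.hn; omega⟩

theorem ω_ne_zero (R : RadfordAlgebra n ω H) : ω ≠ 0 := R.hω.ne_zero (by have := R.hn; omega)

variable (R : RadfordAlgebra n ω H)

theorem g_mul_x : R.g * R.x = ω⁻¹ • (R.x * R.g) := by
  rw [R.rel_xg, smul_smul, inv_mul_cancel₀ R.ω_ne_zero, one_smul]

theorem g_pow_mul_x_pow (i j : ℕ) :
    R.g ^ i * R.x ^ j = ω⁻¹ ^ (i * j) • (R.x ^ j * R.g ^ i) :=
  pow_mul_pow_of_mul_eq_smul R.g_mul_x i j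

theorem comul_monomial (p q l : ℕ) :
    Coalgebra.comul (R := ℂ) (R.y ^ p * R.x ^ q * R.g ^ l) =
      ∑ r ∈ antidiagonal p, ∑ s ∈ antidiagonal q,
        (ω⁻¹ ^ ((r.1 + s.1) * s.2) * qBinom ω p r.2 * qBinom ω q s.1) •
          ((R.y ^ r.1 * R.x ^ s.1 * R.g ^ l) ⊗ₜ[ℂ]
            (R.y ^ r.2 * R.x ^ s.2 * R.g ^ (r.1 + s.1 + l))) := by
  have hy : (R.y ⊗ₜ[ℂ] R.g) * ((1 : H) ⊗ₜ[ℂ] R.y) =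
      ω • (((1 : H) ⊗ₜ[ℂ] R.y) * (R.y ⊗ₜ[ℂ] R.g)) := by
    simp only [Algebra.TensorProduct.tmul_mul_tmul, R.rel_gy, tmul_smul, mul_one, one_mul]
  have hx : ((1 : H) ⊗ₜ[ℂ] R.x) * (R.x ⊗ₜ[ℂ] R.g) =
      ω • ((R.x ⊗ₜ[ℂ] R.g) * ((1 : H) ⊗ₜ[ℂ] R.x)) := by
    simp only [Algebra.TensorProduct.tmul_mul_tmul, R.rel_xg, tmul_smul, mul_one, one_mul]
  rw [Bialgebra.comul_mul, Bialgebra.comul_mul, Bialgebra.comul_pow, Bialgebra.comul_pow,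
    Bialgebra.comul_pow, R.comul_x, R.comul_y, R.comul_g, add_comm (R.y ⊗ₜ[ℂ] R.g),
    add_pow_of_mul_eq_smul hy, add_pow_of_mul_eq_smul hx, ← Nat.sum_antidiagonal_swap,
    sum_mul_sum, sum_mul]
  refine sum_congr rfl fun r _ ↦ ?_
  rw [sum_mul]
  refine sum_congr rfl fun s _ ↦ ?_
  simp only [Prod.fst_swap, Prod.snd_swap, Algebra.TensorProduct.tmul_pow, one_pow,
    Algebra.TensorProduct.tmul_mul_tmul, one_mul, mul_one, smul_mul_assoc, mul_smul_comm,
    smul_smul]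
  rw [mul_assoc (R.y ^ r.2), ← mul_assoc (R.g ^ r.1), ← pow_add, R.g_pow_mul_x_pow,
    mul_smul_comm, smul_mul_assoc, tmul_smul, smul_smul]
  simp only [mul_assoc, ← pow_add]
  congr 1
  ring

theorem repr_monomial (r s m : ℕ) (u : Fin n × Fin n × Fin n) :
    R.basis.repr (R.y ^ r * R.x ^ s * R.g ^ m) u =
      if (u.1 : ℕ) = r ∧ (u.2.1 : ℕ) = s ∧ (u.2.2 : ℕ) = m % n then 1 else 0 := by
  obtain ⟨r', s', l'⟩ := u
  by_cases hrs : r < n ∧ s < n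
  · rw [pow_eq_pow_mod m R.g_pow,
      ← R.basis_eq ⟨r, hrs.1⟩ ⟨s, hrs.2⟩ ⟨m % n, Nat.mod_lt m (by have := R.hn; omega)⟩,
      Module.Basis.repr_self, Finsupp.single_apply]
    simp only [Prod.mk.injEq, Fin.ext_iff, eq_comm]
  · have hzero : R.y ^ r * R.x ^ s = 0 := by
      rcases not_and_or.mp hrs with hr | hs
      · rw [pow_eq_zero_of_le (not_lt.mp hr) R.y_pow, zero_mul]
      · rw [pow_eq_zero_of_le (not_lt.mp hs) R.x_pow, mul_zero]
    rw [hzero, zero_mul, map_zero, Finsupp.zero_apply, if_neg]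
    rintro ⟨rfl, rfl, -⟩
    exact hrs ⟨r'.isLt, s'.isLt⟩

theorem repr_comul_basis (p q l r₁ s₁ l₁ r₂ s₂ l₂ : Fin n) :
    (R.basis.tensorProduct R.basis).repr (Coalgebra.comul (R := ℂ) (R.basis (p, q, l)))
        ((r₁, s₁, l₁), (r₂, s₂, l₂)) =
      if (r₁ : ℕ) + r₂ = p ∧ (s₁ : ℕ) + s₂ = q ∧ l₁ = l ∧ l₂ = r₁ + s₁ + l then
        ω⁻¹ ^ (((r₁ : ℕ) + s₁) * s₂) * qBinom ω p r₂ * qBinom ω q s₁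
      else 0 := by
  rw [R.basis_eq, R.comul_monomial]
  simp only [map_sum, map_smul, Finsupp.coe_finsetSum, Finset.sum_apply, Finsupp.smul_apply,
    Module.Basis.tensorProduct_repr_tmul_apply, repr_monomial, smul_eq_mul]
  have hterm : ∀ x s : ℕ × ℕ,
      ((if (r₂ : ℕ) = x.2 ∧ (s₂ : ℕ) = s.2 ∧ (l₂ : ℕ) = (x.1 + s.1 + l) % n
          then (1 : ℂ) else 0) *
        if (r₁ : ℕ) = x.1 ∧ (s₁ : ℕ) = s.1 ∧ (l₁ : ℕ) = l % n then 1 else 0) =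
      if x = ((r₁ : ℕ), (r₂ : ℕ)) then if s = ((s₁ : ℕ), (s₂ : ℕ)) then
        if l₁ = l ∧ l₂ = r₁ + s₁ + l then 1 else 0 else 0 else 0 := by
    rintro ⟨i, j⟩ ⟨i', j'⟩
    simp only [Prod.mk.injEq, Fin.ext_iff, Fin.val_add, Nat.mod_add_mod,
      Nat.mod_eq_of_lt l.isLt]
    rw [ite_zero_mul_ite_zero, one_mul, ← ite_and, ← ite_and]
    exact if_congr (by grind) rfl rfl
  simp only [hterm, mul_ite, mul_one, mul_zero, sum_ite_irrel, sum_const_zero, sum_ite_eq',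
    Finset.HasAntidiagonal.mem_antidiagonal]
  simp only [ite_and]

theorem repr_comul (v : H) {P Q r₁ s₁ l₁ r₂ s₂ l₂ : Fin n} (hP : (r₁ : ℕ) + r₂ = P)
    (hQ : (s₁ : ℕ) + s₂ = Q) :
    (R.basis.tensorProduct R.basis).repr (Coalgebra.comul (R := ℂ) v)
        ((r₁, s₁, l₁), (r₂, s₂, l₂)) =
      if l₂ = r₁ + s₁ + l₁ then
        ω⁻¹ ^ (((r₁ : ℕ) + s₁) * s₂) * qBinom ω P r₂ * qBinom ω Q s₁ *
          R.basis.repr v (P, Q, l₁)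
      else 0 := by
  conv_lhs => rw [← R.basis.sum_repr v]
  simp only [map_sum, map_smul, Finsupp.coe_finsetSum, Finset.sum_apply, Finsupp.smul_apply,
    smul_eq_mul]
  rw [Finset.sum_eq_single (P, Q, l₁)]
  · rw [repr_comul_basis]
    simp only [hP, hQ, true_and]
    split_ifs <;> ring
  · rintro ⟨p, q, l⟩ - hne
    rw [repr_comul_basis, if_neg, mul_zero]
    rintro ⟨h₁, h₂, rfl, -⟩
    exact hne (by ext <;> simp <;> omega)
  · simp

def groupAlgebra : Submodule ℂ H := Submodule.span ℂ (Set.range (R.g ^ · : ℕ → H))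

theorem star_mem_groupAlgebra (st : HopfStarStructure H) {k : ℕ} (hk : st.star R.g = R.g ^ k)
    {c : H} (hc : c ∈ R.groupAlgebra) : st.star c ∈ R.groupAlgebra := by
  induction hc using Submodule.span_induction with
  | mem _ hm =>
    obtain ⟨m, rfl⟩ := hm
    exact Submodule.subset_span ⟨k * m, by simp [st.star_pow, hk, pow_mul]⟩
  | zero => simp [st.star_zero]
  | add _ _ _ _ h₁ h₂ => simpa [st.star_add] using add_mem h₁ h₂
  | smul _ _ _ h => simpa [st.star_smul] using Submodule.smul_mem _ _ h

section

variable [NeZero n]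

theorem basis_zero_zero (l : Fin n) : R.basis (0, 0, l) = R.g ^ (l : ℕ) := by
  simp [R.basis_eq]

theorem g_ne_zero : R.g ≠ 0 := by
  intro hg
  apply R.basis.ne_zero (0, 0, 0)
  rw [← mul_one (R.basis _), ← R.g_pow, hg, zero_pow (NeZero.ne n), mul_zero]

theorem mem_groupAlgebra_iff {c : H} :
    c ∈ R.groupAlgebra ↔ ∀ r s l, (r, s) ≠ (0, 0) → R.basis.repr c (r, s, l) = 0 := by
  constructor
  · intro hc r s l hrs
    induction hc using Submodule.span_induction with
    | mem _ hm =>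
      obtain ⟨m, rfl⟩ := hm
      dsimp only
      rw [show R.g ^ m = R.y ^ 0 * R.x ^ 0 * R.g ^ m by simp, repr_monomial, if_neg]
      rintro ⟨hr, hs, -⟩
      exact hrs (Prod.ext (Fin.ext hr) (Fin.ext hs))
    | zero => simp
    | add _ _ _ _ h₁ h₂ => simp [h₁, h₂]
    | smul _ _ _ h => simp [h]
  · intro hc
    rw [← R.basis.sum_repr c]
    refine Submodule.sum_mem _ fun ⟨r, s, l⟩ _ ↦ ?_
    by_cases hrs : (r, s) = (0, 0)
    · obtain ⟨rfl, rfl⟩ := Prod.mk.inj hrs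
      exact Submodule.smul_mem _ _ (Submodule.subset_span ⟨l, (R.basis_zero_zero l).symm⟩)
    · rw [hc r s l hrs, zero_smul]
      exact Submodule.zero_mem _

theorem x_notMem_groupAlgebra : R.x ∉ R.groupAlgebra := by
  rw [mem_groupAlgebra_iff]
  intro h
  have h₁ := h 0 ⟨1, R.hn⟩ 0 (by simp [Prod.ext_iff, Fin.ext_iff])
  rw [show R.x = R.y ^ 0 * R.x ^ 1 * R.g ^ 0 by simp, repr_monomial] at h₁
  simp at h₁

theorem eq_g_pow_of_comul_eq_tmul_self {G : H} (hG : G ≠ 0)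
    (hΔ : Coalgebra.comul (R := ℂ) G = G ⊗ₜ[ℂ] G) : ∃ k : Fin n, G = R.g ^ (k : ℕ) := by
  set c := R.basis.repr G
  have coeff : ∀ (P Q r₁ s₁ l₁ r₂ s₂ l₂ : Fin n), (r₁ : ℕ) + r₂ = P → (s₁ : ℕ) + s₂ = Q →
      (if l₂ = r₁ + s₁ + l₁ then
        ω⁻¹ ^ (((r₁ : ℕ) + s₁) * s₂) * qBinom ω P r₂ * qBinom ω Q s₁ * c (P, Q, l₁) else 0) =
        c (r₁, s₁, l₁) * c (r₂, s₂, l₂) := by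
    intro P Q r₁ s₁ l₁ r₂ s₂ l₂ hP hQ
    rw [← R.repr_comul G hP hQ, hΔ, Module.Basis.tensorProduct_repr_tmul_apply, smul_eq_mul,
      mul_comm]
  have left : ∀ r s l l', (if l' = l then c (r, s, l) else 0) = c (0, 0, l) * c (r, s, l') := by
    intro r s l l'
    simpa [qBinom_self, qBinom_zero_right] using coeff r s 0 0 l r s l' (by simp) (by simp)
  have right : ∀ r s l, c (r, s, l) = c (r, s, l) * c (0, 0, r + s + l) := by
    intro r s l
    simpa [qBinom_self, qBinom_zero_right] using
      coeff r s r s l 0 0 (r + s + l) (by simp) (by simp)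
  obtain ⟨k, hk⟩ : ∃ k, c (0, 0, k) ≠ 0 := by
    by_contra! h
    exact hG (R.basis.ext_elem_iff.mpr fun ⟨r, s, l⟩ ↦ by simpa [h] using left r s l l)
  have hk₁ : c (0, 0, k) = 1 := by
    simpa [hk] using left 0 0 k k
  have off_k : ∀ r s l, l ≠ k → c (r, s, l) = 0 := by
    intro r s l hl
    simpa [hl, hk] using left r s k l
  have on_k : ∀ r s, r + s ≠ 0 → c (r, s, k) = 0 := by
    intro r s hrs
    have := right r s k
    rwa [off_k 0 0 _ (by simpa using hrs), mul_zero] at this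
  have mixed : ∀ r s, r ≠ 0 → c (r, s, k) = 0 := by
    intro r s hr
    have := coeff r s r 0 k 0 s (r + 0 + k) (by simp) (by simp)
    rw [on_k r 0 (by simpa using hr), zero_mul] at this
    simpa [qBinom_zero_right, R.ω_ne_zero] using this
  refine ⟨k, R.basis.ext_elem_iff.mpr fun ⟨r, s, l⟩ ↦ ?_⟩
  rw [← R.basis_zero_zero, Module.Basis.repr_self, Finsupp.single_apply]
  by_cases hl : l = k
  · subst hl
    by_cases hr : r = 0
    · subst hr
      by_cases hs : s = 0
      · subst hs
        simpa using hk₁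
      · simpa [Ne.symm hs] using on_k 0 s (by simpa using hs)
    · simpa [Ne.symm hr] using mixed r s hr
  · simpa [Ne.symm hl] using off_k r s l hl

theorem mem_groupAlgebra_of_comul_eq {c : H} {k : Fin n} (hk : k ≠ 1)
    (hΔ : Coalgebra.comul (R := ℂ) c = c ⊗ₜ[ℂ] (R.g ^ (k : ℕ)) + 1 ⊗ₜ[ℂ] c) :
    c ∈ R.groupAlgebra := by
  set a := R.basis.repr c
  have coeff : ∀ (P Q r₁ s₁ l₁ r₂ s₂ : Fin n), (r₁ : ℕ) + r₂ = P → (s₁ : ℕ) + s₂ = Q →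
      ω⁻¹ ^ (((r₁ : ℕ) + s₁) * s₂) * qBinom ω P r₂ * qBinom ω Q s₁ * a (P, Q, l₁) =
        (if (0, 0, k) = (r₂, s₂, r₁ + s₁ + l₁) then a (r₁, s₁, l₁) else 0) +
          if (0, 0, 0) = (r₁, s₁, l₁) then a (r₂, s₂, r₁ + s₁ + l₁) else 0 := by
    intro P Q r₁ s₁ l₁ r₂ s₂ hP hQ
    have := R.repr_comul c (l₁ := l₁) (l₂ := r₁ + s₁ + l₁) hP hQ
    rw [if_pos rfl, hΔ, ← R.basis_zero_zero k, ← pow_zero R.g, ← Fin.val_zero n,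
      ← R.basis_zero_zero] at this
    simpa [Module.Basis.tensorProduct_repr_tmul_apply, Finsupp.single_apply] using this.symm
  have left : ∀ r s l, (r, s) ≠ (0, 0) → l ≠ 0 → a (r, s, l) = 0 := by
    intro r s l hrs hl
    have := coeff r s 0 0 l r s (by simp) (by simp)
    simp [qBinom_self, qBinom_zero_right, Ne.symm hl] at this
    rw [this, if_neg]
    rintro ⟨rfl, rfl, -⟩
    exact hrs rfl
  have right : ∀ r s, (r, s) ≠ (0, 0) → r + s ≠ k → a (r, s, 0) = 0 := by
    intro r s hrs hk'
    have := coeff r s r s 0 0 0 (by simp) (by simp)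
    simp [qBinom_self, qBinom_zero_right, Ne.symm hk'] at this
    rw [this, if_neg]
    rintro ⟨rfl, rfl⟩
    exact hrs rfl
  have mixed : ∀ r s, r ≠ 0 → s ≠ 0 → a (r, s, 0) = 0 := by
    intro r s hr hs
    simpa [qBinom_zero_right, R.ω_ne_zero, Ne.symm hr, Ne.symm hs] using
      coeff r s r 0 0 0 s (by simp) (by simp)
  have hk₂ : k ≠ 0 → 2 ≤ (k : ℕ) := by
    intro hk₀
    have h₀ : (k : ℕ) ≠ 0 := Fin.val_ne_zero_iff.mpr hk₀
    have h₁ : (k : ℕ) ≠ 1 := fun h ↦ hk (Fin.ext (by rw [h, Fin.val_one', Nat.mod_eq_of_lt R.hn]))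
    omega
  have pure_y : k ≠ 0 → a (k, 0, 0) = 0 := by
    intro hk₀
    have := coeff k 0 ⟨k - 1, by omega⟩ 0 0 ⟨1, R.hn⟩ 0 (by simp; have := hk₂ hk₀; omega)
      (by simp)
    simp [qBinom_zero_right, Fin.ext_iff] at this
    rw [if_neg (by have := hk₂ hk₀; omega), mul_eq_zero] at this
    exact this.resolve_left (R.hω.qBinom_one_ne_zero (by omega) k.isLt)
  have pure_x : k ≠ 0 → a (0, k, 0) = 0 := by
    intro hk₀
    have := coeff 0 k 0 ⟨1, R.hn⟩ 0 0 ⟨k - 1, by omega⟩ (by simp)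
      (by simp; have := hk₂ hk₀; omega)
    simp [qBinom_zero_right, Fin.ext_iff] at this
    rw [if_neg (by have := hk₂ hk₀; omega), mul_eq_zero, mul_eq_zero] at this
    exact this.resolve_left
      (not_or.mpr ⟨by simp [R.ω_ne_zero], R.hω.qBinom_one_ne_zero (by omega) k.isLt⟩)
  rw [mem_groupAlgebra_iff]
  intro r s l hrs
  by_cases hl : l = 0
  swap
  · exact left r s l hrs hl
  subst hl
  by_cases hr : r = 0
  · subst hr
    have hs : s ≠ 0 := fun hs ↦ hrs (by rw [hs])
    by_cases hsk : s = k
    · subst hsk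
      exact pure_x hs
    · exact right 0 s hrs (by simpa using hsk)
  · by_cases hs : s = 0
    · subst hs
      by_cases hrk : r = k
      · subst hrk
        exact pure_y hr
      · exact right r 0 hrs (by simpa using hrk)
    · exact mixed r s hr hs

end

end RadfordAlgebra

/-- every `*`-structure on the Radford algebra `H` satisfies
`g* = g`. -/
theorem radford_star_g
    {n : ℕ} {ω : ℂ} {H : Type*} [Ring H] [HopfAlgebra ℂ H]
    (R : RadfordAlgebra n ω H) (st : HopfStarStructure H) :
    st.star R.g = R.g := by
  have := R.neZero
  obtain ⟨k, hk⟩ := R.eq_g_pow_of_comul_eq_tmul_self (st.star_ne_zero R.g_ne_zero)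
    (st.comul_star_of_comul_eq_tmul_self R.comul_g)
  by_contra hne
  have hk₁ : k ≠ 1 := by
    rintro rfl
    rw [Fin.val_one', Nat.mod_eq_of_lt R.hn, pow_one] at hk
    exact hne hk
  have hx : Coalgebra.comul (R := ℂ) (st.star R.x) =
      st.star R.x ⊗ₜ[ℂ] (R.g ^ (k : ℕ)) + 1 ⊗ₜ[ℂ] st.star R.x := by
    rw [st.comul_star, R.comul_x, st.starTensor_add, st.starTensor_tmul, st.starTensor_tmul,
      st.star_one, hk]
  have hx_mem := R.star_mem_groupAlgebra st hk (R.mem_groupAlgebra_of_comul_eq hk₁ hx)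
  rw [st.star_star] at hx_mem
  exact R.x_notMem_groupAlgebra hx_mem
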